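/- In max-times algebra, among all positive vectors x satisfying B ⊗ x ≤ x and max_j x_j = 1 (where B is an n×n nonnegative matrix with Tr(B) ≤ 1), the minimum possible value of max_j (1/x_j) equals ‖B*‖ = max_{i,j} (B*)_{ij}, and this minimum is attained by the vector x_j = 1/max_i (B*)_{ij}, which moreover dominates (entrywise) every feasible x. -/

import Mathlib

/-!
The trace condition says that every cycle of the weighted digraph of `B` has weight at most `1`.
Cutting a cycle out of a walk therefore never decreases its weight, and since every walk of length
at least `n` contains a cycle, `B*` dominates every max-times power `B^k`. Iterating `B ⊗ x ≤ x`
then gives `B*_{ij} x_j ≤ x_i ≤ 1`, which is both the lower bound and the domination `x ≤ x₀`.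
Conversely `B* ⊗ B ≤ B*` makes `x₀`, the reciprocals of the column maxima of `B*`, a solution; at a
maximal entry `j` of `x₀` the same inequality bounds column `j` of `B*` by `1`, so `max x₀ = 1`.
-/

/-- Maximum of a function over `Fin n` (nonempty since `0 < n`). -/
noncomputable def vmax {n : ℕ} (hn : 0 < n) (f : Fin n → ℝ) : ℝ :=
  Finset.univ.sup' (Finset.univ_nonempty_iff.mpr ⟨⟨0, hn⟩⟩) f

/-- Minimum of a function over `Fin n`. -/
noncomputable def vmin {n : ℕ} (hn : 0 < n) (f : Fin n → ℝ) : ℝ :=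
  Finset.univ.inf' (Finset.univ_nonempty_iff.mpr ⟨⟨0, hn⟩⟩) f

/-- Max-times matrix product. -/
noncomputable def mtProd {n : ℕ} (hn : 0 < n) (X Y : Matrix (Fin n) (Fin n) ℝ) :
    Matrix (Fin n) (Fin n) ℝ :=
  fun i j => vmax hn (fun k => X i k * Y k j)

/-- Max-times matrix powers, `B^0 = I`. -/
noncomputable def mtPow {n : ℕ} (hn : 0 < n) (B : Matrix (Fin n) (Fin n) ℝ) :
    ℕ → Matrix (Fin n) (Fin n) ℝ
  | 0 => fun i j => if i = j then (1 : ℝ) else 0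
  | (k + 1) => mtProd hn B (mtPow hn B k)

/-- Kleene star: entrywise maximum of `B^0, ..., B^(n-1)`. -/
noncomputable def kstar {n : ℕ} (hn : 0 < n) (B : Matrix (Fin n) (Fin n) ℝ) :
    Matrix (Fin n) (Fin n) ℝ :=
  fun i j => vmax hn (fun k : Fin n => mtPow hn B k.1 i j)

/-- Max-times matrix-vector product. -/
noncomputable def mtVec {n : ℕ} (hn : 0 < n) (X : Matrix (Fin n) (Fin n) ℝ)
    (x : Fin n → ℝ) : Fin n → ℝ :=
  fun i => vmax hn (fun j => X i j * x j)

section VMax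

variable {n : ℕ} (hn : 0 < n)

lemma le_vmax (f : Fin n → ℝ) (j : Fin n) : f j ≤ vmax hn f :=
  Finset.le_sup' f (Finset.mem_univ j)

lemma vmax_le {f : Fin n → ℝ} {a : ℝ} (h : ∀ j, f j ≤ a) : vmax hn f ≤ a :=
  Finset.sup'_le _ _ fun j _ => h j

lemma exists_vmax_eq (f : Fin n → ℝ) : ∃ j, vmax hn f = f j := by
  obtain ⟨j, -, hj⟩ := Finset.exists_mem_eq_sup' (Finset.univ_nonempty_iff.mpr ⟨⟨0, hn⟩⟩) f
  exact ⟨j, hj⟩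

lemma vmax_mul (f : Fin n → ℝ) {c : ℝ} (hc : 0 ≤ c) :
    vmax hn f * c = vmax hn (fun j => f j * c) :=
  Finset.apply_sup'_eq_sup'_comp _ (· * c) fun _ _ => (monotone_mul_right_of_nonneg hc).map_sup _ _

lemma mul_vmax (f : Fin n → ℝ) {c : ℝ} (hc : 0 ≤ c) :
    c * vmax hn f = vmax hn (fun j => c * f j) :=
  Finset.apply_sup'_eq_sup'_comp _ (c * ·) fun _ _ => (monotone_mul_left_of_nonneg hc).map_sup _ _

lemma vmax_comm (g : Fin n → Fin n → ℝ) :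
    vmax hn (fun i => vmax hn (g i)) = vmax hn (fun j => vmax hn (fun i => g i j)) :=
  Finset.sup'_comm _ _ g

end VMax

section MaxTimes

variable {n : ℕ} (hn : 0 < n) (B : Matrix (Fin n) (Fin n) ℝ)

lemma mtPow_nonneg (hB : ∀ i j, 0 ≤ B i j) (k : ℕ) (i j : Fin n) : 0 ≤ mtPow hn B k i j := by
  induction k generalizing i with
  | zero => simp only [mtPow]; split_ifs <;> norm_num
  | succ k ih =>
    calc (0 : ℝ) ≤ B i i * mtPow hn B k i j := mul_nonneg (hB i i) (ih i)
      _ ≤ _ := le_vmax hn (fun m => B i m * mtPow hn B k m j) i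

lemma mtProd_assoc (X Y Z : Matrix (Fin n) (Fin n) ℝ)
    (hX : ∀ i j, 0 ≤ X i j) (hZ : ∀ i j, 0 ≤ Z i j) :
    mtProd hn X (mtProd hn Y Z) = mtProd hn (mtProd hn X Y) Z := by
  funext i j
  calc vmax hn (fun k => X i k * vmax hn (fun m => Y k m * Z m j))
      = vmax hn (fun k => vmax hn (fun m => X i k * (Y k m * Z m j))) := by
        simp only [mul_vmax hn _ (hX i _)]
    _ = vmax hn (fun m => vmax hn (fun k => X i k * (Y k m * Z m j))) := vmax_comm hn _
    _ = vmax hn (fun m => vmax hn (fun k => X i k * Y k m) * Z m j) := by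
        simp only [vmax_mul hn _ (hZ _ j), mul_assoc]

lemma mtPow_zero_mtProd (M : Matrix (Fin n) (Fin n) ℝ) (hM : ∀ i j, 0 ≤ M i j) :
    mtProd hn (mtPow hn B 0) M = M := by
  funext i j
  apply le_antisymm
  · refine vmax_le hn fun k => ?_
    by_cases h : i = k
    · simp [mtPow, h]
    · simp [mtPow, h, hM i j]
  · calc M i j = mtPow hn B 0 i i * M i j := by simp [mtPow]
      _ ≤ _ := le_vmax hn (fun k => mtPow hn B 0 i k * M k j) i

lemma mtPow_add (hB : ∀ i j, 0 ≤ B i j) (a b : ℕ) :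
    mtPow hn B (a + b) = mtProd hn (mtPow hn B a) (mtPow hn B b) := by
  induction a with
  | zero => rw [Nat.zero_add, mtPow_zero_mtProd hn B _ (mtPow_nonneg hn B hB b)]
  | succ a ih =>
    rw [Nat.add_right_comm]
    change mtProd hn B (mtPow hn B (a + b)) = mtProd hn (mtProd hn B (mtPow hn B a)) _
    rw [ih, mtProd_assoc hn _ _ _ hB (mtPow_nonneg hn B hB b)]

lemma mtPow_mul_mtPow_le (hB : ∀ i j, 0 ≤ B i j) (a b : ℕ) (i j l : Fin n) :
    mtPow hn B a i j * mtPow hn B b j l ≤ mtPow hn B (a + b) i l := by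
  rw [mtPow_add hn B hB a b]
  exact le_vmax hn (fun m => mtPow hn B a i m * mtPow hn B b m l) j

lemma le_mtPow_one (i j : Fin n) : B i j ≤ mtPow hn B 1 i j := by
  calc B i j = B i j * mtPow hn B 0 j j := by simp [mtPow]
    _ ≤ _ := le_vmax hn (fun m => B i m * mtPow hn B 0 m j) j

noncomputable def walkWeight (w : ℕ → Fin n) (K : ℕ) : ℝ :=
  ∏ t ∈ Finset.range K, B (w t) (w (t + 1))

lemma walkWeight_nonneg (hB : ∀ i j, 0 ≤ B i j) (w : ℕ → Fin n) (K : ℕ) :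
    0 ≤ walkWeight B w K :=
  Finset.prod_nonneg fun _ _ => hB _ _

lemma walkWeight_succ (w : ℕ → Fin n) (K : ℕ) :
    walkWeight B w (K + 1) = B (w 0) (w 1) * walkWeight B (fun t => w (t + 1)) K := by
  rw [walkWeight, Finset.prod_range_succ', mul_comm]
  rfl

lemma walkWeight_le_mtPow (hB : ∀ i j, 0 ≤ B i j) (K : ℕ) (w : ℕ → Fin n) :
    walkWeight B w K ≤ mtPow hn B K (w 0) (w K) := by
  induction K generalizing w with
  | zero => simp [walkWeight, mtPow]
  | succ K ih =>
    rw [walkWeight_succ]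
    calc B (w 0) (w 1) * walkWeight B (fun t => w (t + 1)) K
        ≤ B (w 0) (w 1) * mtPow hn B K (w 1) (w (K + 1)) :=
          mul_le_mul_of_nonneg_left (ih _) (hB _ _)
      _ ≤ _ := le_vmax hn (fun m => B (w 0) m * mtPow hn B K m (w (K + 1))) (w 1)

lemma exists_walk_mtPow_le (hB : ∀ i j, 0 ≤ B i j) (K : ℕ) (i j : Fin n) :
    ∃ w : ℕ → Fin n, w 0 = i ∧ w (K + 1) = j ∧
      mtPow hn B (K + 1) i j ≤ walkWeight B w (K + 1) := by
  induction K generalizing i with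
  | zero =>
    refine ⟨fun t => if t = 0 then i else j, rfl, rfl, ?_⟩
    refine vmax_le hn fun m => ?_
    by_cases h : m = j
    · simp [h, mtPow, walkWeight]
    · simp [h, mtPow, walkWeight, hB i j]
  | succ K ih =>
    obtain ⟨m, hm⟩ := exists_vmax_eq hn (fun m => B i m * mtPow hn B (K + 1) m j)
    obtain ⟨w, hw0, hwK, hw⟩ := ih m
    refine ⟨fun t => if t = 0 then i else w (t - 1), rfl, by simpa using hwK, ?_⟩
    rw [walkWeight_succ]
    change vmax hn _ ≤ _
    rw [hm]
    simpa [hw0] using mul_le_mul_of_nonneg_left hw (hB i m)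

def cutCycle (w : ℕ → Fin n) (s d : ℕ) : ℕ → Fin n :=
  fun r => if r ≤ s then w r else w (r + d)

lemma walkWeight_cutCycle (w : ℕ → Fin n) (s d m : ℕ) (h : w s = w (s + d)) :
    walkWeight B w (s + d + m) =
      walkWeight B (cutCycle w s d) (s + m) * walkWeight B (fun r => w (s + r)) d := by
  have head : ∏ r ∈ Finset.range s, B (w r) (w (r + 1)) =
      ∏ r ∈ Finset.range s, B (cutCycle w s d r) (cutCycle w s d (r + 1)) := by
    refine Finset.prod_congr rfl fun r hr => ?_
    rw [Finset.mem_range] at hr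
    simp [cutCycle, hr.le, Nat.succ_le_of_lt hr]
  have tail : ∏ r ∈ Finset.range m, B (w (s + d + r)) (w (s + d + r + 1)) =
      ∏ r ∈ Finset.range m, B (cutCycle w s d (s + r)) (cutCycle w s d (s + r + 1)) := by
    refine Finset.prod_congr rfl fun r _ => ?_
    rcases Nat.eq_zero_or_pos r with rfl | hr
    · simp [cutCycle, h, Nat.add_right_comm s d 1]
    · simp only [cutCycle, if_neg (show ¬ s + r ≤ s by omega),
        if_neg (show ¬ s + r + 1 ≤ s by omega), Nat.add_right_comm s d, Nat.add_right_comm _ d 1]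
  simp only [walkWeight, Finset.prod_range_add, head, tail, ← add_assoc]
  ring

lemma exists_walk_repeat (w : ℕ → Fin n) : ∃ s d, 0 < d ∧ s + d ≤ n ∧ w s = w (s + d) := by
  obtain ⟨a, b, hab, heq⟩ :=
    Fintype.exists_ne_map_eq_of_card_lt (fun t : Fin (n + 1) => w t) (by simp)
  rcases lt_or_gt_of_ne (Fin.val_ne_of_ne hab) with h | h
  · exact ⟨a, b - a, by omega, by omega, by simpa [Nat.add_sub_cancel' h.le] using heq⟩
  · exact ⟨b, a - b, by omega, by omega, by simpa [Nat.add_sub_cancel' h.le] using heq.symm⟩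

lemma mtPow_le_kstar (hB : ∀ i j, 0 ≤ B i j)
    (hTr : ∀ k, 1 ≤ k → k ≤ n → ∀ i, mtPow hn B k i i ≤ 1) (K : ℕ) (i j : Fin n) :
    mtPow hn B K i j ≤ kstar hn B i j := by
  induction K using Nat.strong_induction_on generalizing i j with
  | _ K IH =>
  by_cases hKn : K < n
  · exact le_vmax hn (fun k : Fin n => mtPow hn B k.1 i j) ⟨K, hKn⟩
  obtain ⟨K, rfl⟩ : ∃ K', K = K' + 1 := Nat.exists_eq_add_one.mpr (by omega)
  obtain ⟨w, rfl, rfl, hw⟩ := exists_walk_mtPow_le hn B hB K i j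
  obtain ⟨s, d, hd, hsd, hcyc⟩ := exists_walk_repeat w
  obtain ⟨m, hm⟩ : ∃ m, K + 1 = s + d + m := ⟨K + 1 - (s + d), by omega⟩
  have hcut : cutCycle w s d 0 = w 0 ∧ cutCycle w s d (s + m) = w (K + 1) := by
    refine ⟨if_pos (Nat.zero_le s), ?_⟩
    rw [hm, cutCycle]
    split_ifs with hm0
    · obtain rfl : m = 0 := by omega
      exact hcyc
    · rw [Nat.add_right_comm]
  have hcycle : walkWeight B (fun r => w (s + r)) d ≤ 1 := by
    have := walkWeight_le_mtPow hn B hB d (fun r => w (s + r))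
    simp only [Nat.add_zero, ← hcyc] at this
    exact this.trans (hTr d hd (by omega) _)
  calc mtPow hn B (K + 1) (w 0) (w (K + 1)) ≤ walkWeight B w (K + 1) := hw
    _ = walkWeight B (cutCycle w s d) (s + m) * walkWeight B (fun r => w (s + r)) d := by
        rw [hm, walkWeight_cutCycle B w s d m hcyc]
    _ ≤ walkWeight B (cutCycle w s d) (s + m) :=
        mul_le_of_le_one_right (walkWeight_nonneg B hB _ _) hcycle
    _ ≤ mtPow hn B (s + m) (w 0) (w (K + 1)) := by
        simpa only [hcut] using walkWeight_le_mtPow hn B hB (s + m) (cutCycle w s d)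
    _ ≤ kstar hn B (w 0) (w (K + 1)) := IH _ (by omega) _ _

lemma one_le_kstar_self (j : Fin n) : 1 ≤ kstar hn B j j := by
  change 1 ≤ vmax hn _
  simpa [mtPow] using le_vmax hn (fun k : Fin n => mtPow hn B k.1 j j) ⟨0, hn⟩

lemma kstar_mul_entry_le (hB : ∀ i j, 0 ≤ B i j)
    (hTr : ∀ k, 1 ≤ k → k ≤ n → ∀ i, mtPow hn B k i i ≤ 1) (l i j : Fin n) :
    kstar hn B l i * B i j ≤ kstar hn B l j := by
  obtain ⟨k, hk⟩ := exists_vmax_eq hn (fun k : Fin n => mtPow hn B k.1 l i)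
  calc kstar hn B l i * B i j = mtPow hn B k.1 l i * B i j := congrArg (· * B i j) hk
    _ ≤ mtPow hn B k.1 l i * mtPow hn B 1 i j :=
        mul_le_mul_of_nonneg_left (le_mtPow_one hn B i j) (mtPow_nonneg hn B hB _ l i)
    _ ≤ mtPow hn B (k.1 + 1) l j := mtPow_mul_mtPow_le hn B hB _ 1 l i j
    _ ≤ kstar hn B l j := mtPow_le_kstar hn B hB hTr _ l j

lemma vmax_kstar_col_mul_le (hB : ∀ i j, 0 ≤ B i j)
    (hTr : ∀ k, 1 ≤ k → k ≤ n → ∀ i, mtPow hn B k i i ≤ 1) (i j : Fin n) :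
    vmax hn (fun l => kstar hn B l i) * B i j ≤ vmax hn (fun l => kstar hn B l j) := by
  rw [vmax_mul hn _ (hB i j)]
  exact vmax_le hn fun l =>
    (kstar_mul_entry_le hn B hB hTr l i j).trans (le_vmax hn (kstar hn B · j) l)

lemma mtPow_mul_le_of_mtVec_le (hB : ∀ i j, 0 ≤ B i j) {x : Fin n → ℝ} (hx : ∀ i, 0 ≤ x i)
    (hBx : ∀ i, mtVec hn B x i ≤ x i) (k : ℕ) (i j : Fin n) : mtPow hn B k i j * x j ≤ x i := by
  induction k generalizing i with
  | zero =>
    by_cases h : i = j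
    · simp [mtPow, h]
    · simpa [mtPow, h] using hx i
  | succ k ih =>
    change vmax hn _ * x j ≤ x i
    rw [vmax_mul hn _ (hx j)]
    refine vmax_le hn fun m => ?_
    calc B i m * mtPow hn B k m j * x j = B i m * (mtPow hn B k m j * x j) := mul_assoc _ _ _
      _ ≤ B i m * x m := mul_le_mul_of_nonneg_left (ih m) (hB i m)
      _ ≤ mtVec hn B x i := le_vmax hn (fun m => B i m * x m) m
      _ ≤ x i := hBx i

lemma kstar_mul_le_of_mtVec_le (hB : ∀ i j, 0 ≤ B i j) {x : Fin n → ℝ} (hx : ∀ i, 0 ≤ x i)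
    (hBx : ∀ i, mtVec hn B x i ≤ x i) (i j : Fin n) : kstar hn B i j * x j ≤ x i := by
  rw [kstar, vmax_mul hn _ (hx j)]
  exact vmax_le hn fun k => mtPow_mul_le_of_mtVec_le hn B hB hx hBx k.1 i j

lemma vmax_kstar_col_le_one_of_mtVec_le (hB : ∀ i j, 0 ≤ B i j) {x : Fin n → ℝ}
    (hx : ∀ i, 0 ≤ x i) (hBx : ∀ i, mtVec hn B x i ≤ x i) {j : Fin n} (hxj : 0 < x j)
    (hmax : ∀ i, x i ≤ x j) : vmax hn (fun i => kstar hn B i j) ≤ 1 :=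
  vmax_le hn fun i =>
    (mul_le_iff_le_one_left hxj).mp ((kstar_mul_le_of_mtVec_le hn B hB hx hBx i j).trans (hmax i))

end MaxTimes

theorem worst_differentiating_solution {n : ℕ} (hn : 0 < n)
    (B : Matrix (Fin n) (Fin n) ℝ)
    (hB : ∀ i j, 0 ≤ B i j)
    (hTr : ∀ k, 1 ≤ k → k ≤ n → ∀ i, mtPow hn B k i i ≤ 1)
    (x₀ : Fin n → ℝ)
    (hx₀ : ∀ j, x₀ j = 1 / vmax hn (fun i => kstar hn B i j)) :
    (∀ x : Fin n → ℝ, (∀ i, 0 < x i) → (∀ i, mtVec hn B x i ≤ x i) →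
        vmax hn x = 1 →
        vmax hn (fun i => vmax hn (fun j => kstar hn B i j)) ≤
          vmax hn (fun j => 1 / x j)) ∧
    ((∀ i, mtVec hn B x₀ i ≤ x₀ i) ∧ vmax hn x₀ = 1 ∧
      vmax hn (fun j => 1 / x₀ j) =
        vmax hn (fun i => vmax hn (fun j => kstar hn B i j))) ∧
    (∀ x : Fin n → ℝ, (∀ i, 0 < x i) → (∀ i, mtVec hn B x i ≤ x i) →
        vmax hn x = 1 → ∀ j, x j ≤ x₀ j) := by
  have hc1 j : 1 ≤ vmax hn (fun i => kstar hn B i j) :=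
    (one_le_kstar_self hn B j).trans (le_vmax hn (kstar hn B · j) j)
  have hcpos j : 0 < vmax hn (fun i => kstar hn B i j) := one_pos.trans_le (hc1 j)
  have hx₀pos j : 0 < x₀ j := by rw [hx₀ j]; exact one_div_pos.mpr (hcpos j)
  have hBx₀ i : mtVec hn B x₀ i ≤ x₀ i := vmax_le hn fun j => by
    rw [hx₀ i, hx₀ j, mul_one_div, div_le_div_iff₀ (hcpos j) (hcpos i), one_mul, mul_comm]
    exact vmax_kstar_col_mul_le hn B hB hTr i j
  have hbound (x : Fin n → ℝ) (hx : ∀ i, 0 < x i) (hBx : ∀ i, mtVec hn B x i ≤ x i)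
      (hnorm : vmax hn x = 1) (i j : Fin n) : kstar hn B i j * x j ≤ 1 :=
    hnorm ▸ (kstar_mul_le_of_mtVec_le hn B hB (fun i => (hx i).le) hBx i j).trans (le_vmax hn x i)
  refine ⟨fun x hx hBx hnorm => ?_, ⟨hBx₀, le_antisymm ?_ ?_, ?_⟩, fun x hx hBx hnorm j => ?_⟩
  · refine vmax_le hn fun i => vmax_le hn fun j => le_trans ?_ (le_vmax hn _ j)
    rw [le_div_iff₀ (hx j)]
    exact hbound x hx hBx hnorm i j
  · refine vmax_le hn fun j => ?_
    rw [hx₀ j, div_le_one (hcpos j)]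
    exact hc1 j
  · obtain ⟨j, hj⟩ := exists_vmax_eq hn x₀
    have hcol := vmax_kstar_col_le_one_of_mtVec_le hn B hB (fun i => (hx₀pos i).le) hBx₀
      (hx₀pos j) (fun i => hj ▸ le_vmax hn x₀ i)
    rw [hj, hx₀ j, le_div_iff₀ (hcpos j), one_mul]
    exact hcol
  · simp only [hx₀, one_div_one_div]
    exact (vmax_comm hn _).symm
  · obtain ⟨i, hi⟩ := exists_vmax_eq hn (fun i => kstar hn B i j)
    rw [hx₀ j, le_div_iff₀ (hcpos j), hi, mul_comm]
    exact hbound x hx hBx hnorm i j
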